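/- arXiv:2505.00728 — 2 statements merged into one kernel-verified Lean document; each statement's English description precedes it below -/
import Mathlib

section
/- Let P be a path that is ascending with respect to a charge drop schedule C and let b ∈ [0,B]. Then α_b(P) = min{B, b + g(P)} ≥ min{B, b + g^C(P)}; in particular P is strongly traversable. -/
/-!
The charge at `v_i` equals `b + g(v_1…v_i)` or `B + g(v_j…v_i)` for the last vertex `v_j` at which
the battery was full. If `P` is ascending with respect to `C`, then, drops being nonnegative, it is
ascending with respect to the zero schedule: all vertex gains lie in `[0, g(P)]`. So no arc can fail
from `b ≥ 0` unless it fails from `B`, and every `g(v_j…v_k)` is nonnegative, giving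
`α_b(P) = min{B, b + g(P)}`; finally `g^C(P) ≤ g(P)`.
-/

open Finset

namespace EV

noncomputable section

/-- Charge after traversing `i` arcs of a path with arc gains `g`, battery capacity `B`,
initial charge `b`. -/
def charge (B b : ℝ) (g : ℕ → ℝ) : ℕ → ℝ
  | 0 => b
  | i + 1 => min (charge B b g i + g i) B

/-- The traversal of the path with `n` arcs is feasible from initial charge `b`. -/
def Feasible (B b : ℝ) (g : ℕ → ℝ) (n : ℕ) : Prop :=
  ∀ i < n, 0 ≤ charge B b g i + g i

open Classical in
/-- Maximum final charge `α_b(P)` for a path `P` with `n` arc gains `g`,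
as an extended real (`⊥ = -∞` if the traversal is infeasible). -/
def alpha (B b : ℝ) (g : ℕ → ℝ) (n : ℕ) : EReal :=
  if Feasible B b g n then ((charge B b g n : ℝ) : EReal) else ⊥

/-- Gain of the `i`-th vertex (0-indexed): the sum of the first `i` arc gains. -/
def vGain (g : ℕ → ℝ) (i : ℕ) : ℝ := ∑ t ∈ Finset.range i, g t

/-- `P` is traversable: `α_B(P) ≥ 0`, i.e. feasible from a full battery. -/
def Traversable (B : ℝ) (g : ℕ → ℝ) (n : ℕ) : Prop := Feasible B B g n

/-- `C` is a charge drop schedule for a path with `n` arcs (vertices `0,…,n`):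
no drop at the first vertex, all drops nonnegative. -/
def Schedule (C : ℕ → ℝ) (n : ℕ) : Prop := C 0 = 0 ∧ ∀ i ≤ n, 0 ≤ C i

/-- Gain of vertex `i` with respect to the charge drop schedule `C`. -/
def cGain (g C : ℕ → ℝ) (i : ℕ) : ℝ := vGain g i - ∑ t ∈ Finset.range (i + 1), C t

/-- `P` (with `n` arcs) is ascending with respect to the schedule `C`. -/
def AscendingC (B : ℝ) (g C : ℕ → ℝ) (n : ℕ) : Prop :=
  Traversable B g n ∧ ∀ i ≤ n, 0 ≤ cGain g C i ∧ cGain g C i ≤ cGain g C n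

/-- `P` (with `n` arcs) is descending with respect to the schedule `C`. -/
def DescendingC (B : ℝ) (g C : ℕ → ℝ) (n : ℕ) : Prop :=
  Traversable B g n ∧ ∀ i ≤ n, cGain g C n ≤ cGain g C i ∧ cGain g C i ≤ 0

/-- `P` is monotone with respect to the schedule `C`. -/
def MonotoneC (B : ℝ) (g C : ℕ → ℝ) (n : ℕ) : Prop :=
  AscendingC B g C n ∨ DescendingC B g C n

/-- Ascending with respect to the zero schedule. -/
def Ascending (B : ℝ) (g : ℕ → ℝ) (n : ℕ) : Prop := AscendingC B g (fun _ => 0) n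

/-- Descending with respect to the zero schedule. -/
def Descending (B : ℝ) (g : ℕ → ℝ) (n : ℕ) : Prop := DescendingC B g (fun _ => 0) n

/-- Monotone with respect to the zero schedule. -/
def MonotonePath (B : ℝ) (g : ℕ → ℝ) (n : ℕ) : Prop := Ascending B g n ∨ Descending B g n

/-- The contiguous subpath whose arcs start at arc index `a`. -/
def SubPath (g : ℕ → ℝ) (a : ℕ) : ℕ → ℝ := fun t => g (a + t)

/-- Restriction of a charge drop schedule to the subpath starting at vertex `a`:
no drop at the subpath's first vertex. -/
def restrict (C : ℕ → ℝ) (a : ℕ) : ℕ → ℝ := fun t => if t = 0 then 0 else C (a + t)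

/-- First-arc-bounded with respect to a schedule `C` (no drop at the second vertex,
and all vertex gains lie between the gains of the first two vertices). -/
def FirstArcBoundedC (g C : ℕ → ℝ) (n : ℕ) : Prop :=
  C 1 = 0 ∧
    ((0 ≤ g 0 ∧ ∀ i ≤ n, 0 ≤ cGain g C i ∧ cGain g C i ≤ g 0) ∨
     (g 0 ≤ 0 ∧ ∀ i ≤ n, g 0 ≤ cGain g C i ∧ cGain g C i ≤ 0))

/-- Last-arc-bounded with respect to a schedule `C` (no drops at the last two vertices,
and all vertex gains lie between the gains of the last two vertices). -/
def LastArcBoundedC (g C : ℕ → ℝ) (n : ℕ) : Prop :=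
  C (n - 1) = 0 ∧ C n = 0 ∧
    ((0 ≤ g (n - 1) ∧ ∀ i ≤ n, cGain g C (n - 1) ≤ cGain g C i ∧ cGain g C i ≤ cGain g C n) ∨
     (g (n - 1) < 0 ∧ ∀ i ≤ n, cGain g C n ≤ cGain g C i ∧ cGain g C i ≤ cGain g C (n - 1)))

/-- First-arc-bounded (zero schedule). -/
def FirstArcBounded (g : ℕ → ℝ) (n : ℕ) : Prop := FirstArcBoundedC g (fun _ => 0) n

/-- Last-arc-bounded (zero schedule). -/
def LastArcBounded (g : ℕ → ℝ) (n : ℕ) : Prop := LastArcBoundedC g (fun _ => 0) n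

/-- Arc-bounded: first- or last-arc-bounded. -/
def ArcBounded (g : ℕ → ℝ) (n : ℕ) : Prop := FirstArcBounded g n ∨ LastArcBounded g n

/-- A funnel: arc-bounded and containing no monotone subpath of 2 or 3 consecutive arcs. -/
def Funnel (B : ℝ) (g : ℕ → ℝ) (n : ℕ) : Prop :=
  ArcBounded g n ∧ ∀ a m, (m = 2 ∨ m = 3) → a + m ≤ n → ¬ MonotonePath B (SubPath g a) m

/-- `j = s̄(i)`: the maximal index `j ≥ i` (among arcs of a path with `n` arcs) such that
the subpath of arcs `i,…,j` is first-arc-bounded. -/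
def IsSbar (g : ℕ → ℝ) (n i j : ℕ) : Prop :=
  i ≤ j ∧ j < n ∧ FirstArcBounded (SubPath g i) (j - i + 1) ∧
    ∀ j', i ≤ j' → j' < n → FirstArcBounded (SubPath g i) (j' - i + 1) → j' ≤ j

/-- `j = s̲(i)`: the minimal index `j ≤ i` such that the subpath of arcs `j,…,i`
is last-arc-bounded. -/
def IsSlow (g : ℕ → ℝ) (n i j : ℕ) : Prop :=
  j ≤ i ∧ i < n ∧ LastArcBounded (SubPath g j) (i - j + 1) ∧
    ∀ j', j' ≤ i → LastArcBounded (SubPath g j') (i - j' + 1) → j ≤ j'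

/-- Arc gains of the walk around a cycle with `m` arc gains `g`, starting at vertex `a`. -/
def cyc (g : ℕ → ℝ) (m a : ℕ) : ℕ → ℝ := fun t => g ((a + t) % m)

/-- A walk of length `ℓ` from `x` to `y` in the directed graph with arc relation `A`. -/
def IsWalk {V : Type*} (A : V → V → Prop) (w : ℕ → V) (ℓ : ℕ) (x y : V) : Prop :=
  w 0 = x ∧ w ℓ = y ∧ ∀ t < ℓ, A (w t) (w (t + 1))

/-- The sequence of arc gains induced by a walk `w` in a graph with gain function `g`. -/
def walkGains {V : Type*} (g : V → V → ℝ) (w : ℕ → V) : ℕ → ℝ :=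
  fun t => g (w t) (w (t + 1))

lemma vGain_zero (g : ℕ → ℝ) : vGain g 0 = 0 :=
  Finset.sum_range_zero g

lemma vGain_succ (g : ℕ → ℝ) (i : ℕ) : vGain g (i + 1) = vGain g i + g i :=
  Finset.sum_range_succ g i

section Charge

variable {B b : ℝ} {g : ℕ → ℝ}

lemma charge_le (hbB : b ≤ B) (g : ℕ → ℝ) (i : ℕ) : charge B b g i ≤ B := by
  cases i with
  | zero => exact hbB
  | succ i => exact min_le_right _ _

lemma charge_le_charge_add {j i : ℕ} (h : j ≤ i) :
    charge B b g i ≤ charge B b g j + (vGain g i - vGain g j) := by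
  induction i, h using Nat.le_induction with
  | base => simp
  | succ i hji ih =>
      calc charge B b g (i + 1) ≤ charge B b g i + g i := min_le_left _ _
        _ ≤ charge B b g j + (vGain g (i + 1) - vGain g j) := by rw [vGain_succ]; linarith

lemma le_charge {x : ℝ} {i : ℕ} (hb : x ≤ b + vGain g i)
    (hB : ∀ j ≤ i, x ≤ B + vGain g i - vGain g j) : x ≤ charge B b g i := by
  induction i generalizing x with
  | zero => simpa [charge, vGain_zero] using hb
  | succ i ih =>
      refine le_min ?_ (by simpa using hB (i + 1) le_rfl)
      have hx : x - g i ≤ charge B b g i := by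
        refine ih ?_ fun j hj => ?_
        · rw [vGain_succ] at hb; linarith
        · have := hB j (by omega); rw [vGain_succ] at this; linarith
      linarith

/-- Nonnegative vertex gains cover the deficit of an arc counted from the start, traversability
covers it counted from any vertex where the battery is full. -/
lemma Traversable.feasible {n : ℕ} (hT : Traversable B g n) (h0 : ∀ i ≤ n, 0 ≤ vGain g i)
    (hb : 0 ≤ b) : Feasible B b g n := by
  intro i hi
  suffices -g i ≤ charge B b g i by linarith
  refine le_charge ?_ fun j hj => ?_
  · have := h0 (i + 1) hi; rw [vGain_succ] at this; linarith
  · linarith [hT i hi, charge_le_charge_add (B := B) (b := B) (g := g) hj,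
      charge_le (le_refl B) g j]

lemma charge_eq_min {n : ℕ} (hbB : b ≤ B) (h : ∀ j ≤ n, vGain g j ≤ vGain g n) :
    charge B b g n = min B (b + vGain g n) := by
  refine le_antisymm (le_min (charge_le hbB g n) ?_) (le_charge (min_le_right _ _) fun j hj => ?_)
  · simpa [charge, vGain_zero] using charge_le_charge_add (B := B) (b := b) (g := g) n.zero_le
  · linarith [h j hj, min_le_left B (b + vGain g n)]

end Charge

section Schedule

variable {g C : ℕ → ℝ} {n : ℕ}

@[simp]
lemma cGain_zero_schedule (g : ℕ → ℝ) (i : ℕ) : cGain g (fun _ => 0) i = vGain g i := by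
  simp [cGain]

lemma vGain_eq_cGain_add (g C : ℕ → ℝ) (i : ℕ) :
    vGain g i = cGain g C i + ∑ t ∈ range (i + 1), C t := by
  rw [cGain]; ring

lemma Schedule.sum_nonneg (hC : Schedule C n) {i : ℕ} (hi : i ≤ n) :
    0 ≤ ∑ t ∈ range (i + 1), C t :=
  Finset.sum_nonneg fun t ht => hC.2 t (by rw [mem_range] at ht; omega)

lemma Schedule.sum_mono (hC : Schedule C n) {i j : ℕ} (hij : i ≤ j) (hj : j ≤ n) :
    ∑ t ∈ range (i + 1), C t ≤ ∑ t ∈ range (j + 1), C t :=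
  Finset.sum_le_sum_of_subset_of_nonneg (range_subset_range.mpr (by omega))
    fun t ht _ => hC.2 t (by rw [mem_range] at ht; omega)

lemma Schedule.cGain_le_vGain (hC : Schedule C n) {i : ℕ} (hi : i ≤ n) :
    cGain g C i ≤ vGain g i := by
  linarith [vGain_eq_cGain_add g C i, hC.sum_nonneg hi]

lemma AscendingC.ascending {B : ℝ} (hP : AscendingC B g C n) (hC : Schedule C n) :
    Ascending B g n := by
  refine ⟨hP.1, fun i hi => ?_⟩
  obtain ⟨hi0, hin⟩ := hP.2 i hi
  rw [cGain_zero_schedule, cGain_zero_schedule, vGain_eq_cGain_add g C i,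
    vGain_eq_cGain_add g C n]
  exact ⟨add_nonneg hi0 (hC.sum_nonneg hi), add_le_add hin (hC.sum_mono hi le_rfl)⟩

end Schedule

section Ascending

variable {B b : ℝ} {g : ℕ → ℝ} {n : ℕ}

lemma Ascending.vGain_nonneg (hA : Ascending B g n) {i : ℕ} (hi : i ≤ n) : 0 ≤ vGain g i := by
  simpa using (hA.2 i hi).1

lemma Ascending.vGain_le (hA : Ascending B g n) {i : ℕ} (hi : i ≤ n) : vGain g i ≤ vGain g n := by
  simpa using (hA.2 i hi).2

lemma Ascending.alpha_eq (hA : Ascending B g n) (hb0 : 0 ≤ b) (hbB : b ≤ B) :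
    alpha B b g n = ((min B (b + vGain g n) : ℝ) : EReal) := by
  rw [alpha, if_pos (hA.1.feasible (fun _ => hA.vGain_nonneg) hb0),
    charge_eq_min hbB fun _ => hA.vGain_le]

end Ascending

theorem alpha_of_ascending_general (B : ℝ) (g C : ℕ → ℝ) (n : ℕ)
    (hC : Schedule C n) (hP : AscendingC B g C n)
    (b : ℝ) (hb0 : 0 ≤ b) (hbB : b ≤ B) :
    alpha B b g n = ((min B (b + vGain g n) : ℝ) : EReal) ∧
    ((min B (b + cGain g C n) : ℝ) : EReal) ≤ alpha B b g n ∧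
    (0 : EReal) ≤ alpha B 0 g n := by
  have hA := hP.ascending hC
  have hB : 0 ≤ B := hb0.trans hbB
  refine ⟨hA.alpha_eq hb0 hbB, ?_, ?_⟩
  · rw [hA.alpha_eq hb0 hbB, EReal.coe_le_coe_iff]
    exact min_le_min_left B (add_le_add_right (hC.cGain_le_vGain le_rfl) b)
  · rw [hA.alpha_eq le_rfl hB, zero_add]
    exact EReal.coe_nonneg.mpr (le_min hB (hA.vGain_nonneg le_rfl))

/-- If `P` is ascending with respect to a schedule `C` and `b ∈ [0,B]`, then
`α_b(P) = min{B, b + g(P)} ≥ min{B, b + g^C(P)}`; in particular `P` is strongly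
traversable. -/
theorem alpha_of_ascending (B : ℝ) (hB : 0 < B) (g C : ℕ → ℝ) (n : ℕ)
    (hC : Schedule C n) (hP : AscendingC B g C n)
    (b : ℝ) (hb0 : 0 ≤ b) (hbB : b ≤ B) :
    alpha B b g n = ((min B (b + vGain g n) : ℝ) : EReal) ∧
    ((min B (b + cGain g C n) : ℝ) : EReal) ≤ alpha B b g n ∧
    (0 : EReal) ≤ alpha B 0 g n :=
  alpha_of_ascending_general B g C n hC hP b hb0 hbB

end

end EV
end

section
/- Let P = v_1…v_k be a path that is last-arc-bounded with respect to a charge drop schedule C with g_{k−1} < 0, and let b ∈ [0,B]. If g_{k−1} ≥ −B and g^C(P) ≥ −b, then α_b(P) ≥ min{b + g^C(P), B + g_{k−1}}. -/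
/-!
Shift the vertex gains w.r.t. `C` by the constant `c = min b (B - g^C(v_{k-1}))`. Since drops are
nonnegative, the shifted gains grow by at most `g_i` along each arc, start at most at `b`, and never
exceed `B` because `v_{k-1}` carries the largest gain; hence they stay below the battery charge
throughout. They are nonnegative as the smallest one, at `v_k`, is `min (b + g^C(P)) (B + g_{k-1})`.
-/

open Finset

namespace EV

noncomputable section

theorem cGain_succ (g C : ℕ → ℝ) (i : ℕ) :
    cGain g C (i + 1) = cGain g C i + g i - C (i + 1) := by
  simp only [cGain, vGain, sum_range_succ]
  ring

theorem cGain_zero (g C : ℕ → ℝ) : cGain g C 0 = -C 0 := by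
  simp [cGain, vGain]

theorem cGain_eq_cGain_pred_add (g C : ℕ → ℝ) {n : ℕ} (hn : 1 ≤ n) (hCn : C n = 0) :
    cGain g C n = cGain g C (n - 1) + g (n - 1) := by
  obtain ⟨m, rfl⟩ := Nat.exists_eq_add_of_le' hn
  rw [Nat.add_sub_cancel, cGain_succ, hCn, sub_zero]

theorem LastArcBoundedC.cGain_bounds_of_neg {g C : ℕ → ℝ} {n : ℕ} (h : LastArcBoundedC g C n)
    (hneg : g (n - 1) < 0) :
    ∀ i ≤ n, cGain g C n ≤ cGain g C i ∧ cGain g C i ≤ cGain g C (n - 1) := by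
  rcases h.2.2 with ⟨hpos, -⟩ | ⟨-, hbounds⟩
  · exact absurd hpos hneg.not_ge
  · exact hbounds

section LowerEnvelope

variable {B b : ℝ} {g f : ℕ → ℝ} {n : ℕ}

theorem le_charge_of_envelope (h0 : f 0 ≤ b) (hstep : ∀ i < n, f (i + 1) ≤ f i + g i)
    (hB : ∀ i ≤ n, f i ≤ B) : ∀ i ≤ n, f i ≤ charge B b g i := by
  intro i
  induction i with
  | zero => exact fun _ => h0
  | succ i ih =>
    intro hi
    have hprev := ih (by omega)
    exact le_min (by linarith [hstep i hi]) (hB _ hi)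

theorem le_alpha_of_envelope (h0 : f 0 ≤ b) (hstep : ∀ i < n, f (i + 1) ≤ f i + g i)
    (hB : ∀ i ≤ n, f i ≤ B) (hnonneg : ∀ i ≤ n, 0 ≤ f i) :
    (f n : EReal) ≤ alpha B b g n := by
  have hcharge := le_charge_of_envelope h0 hstep hB
  have hfeas : Feasible B b g n := fun i hi => by
    linarith [hnonneg (i + 1) hi, hstep i hi, hcharge i hi.le]
  rw [alpha, if_pos hfeas]
  exact_mod_cast hcharge n le_rfl

end LowerEnvelope

theorem alpha_of_lastArcBounded_general (B : ℝ) (g C : ℕ → ℝ) (n : ℕ) (hn : 1 ≤ n)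
    (hC : Schedule C n) (hLAB : LastArcBoundedC g C n) (hneg : g (n - 1) < 0)
    (b : ℝ) (hgB : -B ≤ g (n - 1)) (hg : -b ≤ cGain g C n) :
    ((min (b + cGain g C n) (B + g (n - 1)) : ℝ) : EReal) ≤ alpha B b g n := by
  set G := cGain g C
  set c := min b (B - G (n - 1))
  have hbounds := hLAB.cGain_bounds_of_neg hneg
  have hlast : G n = G (n - 1) + g (n - 1) := cGain_eq_cGain_pred_add g C hn hLAB.2.1
  have hfinal : c + G n = min (b + G n) (B + g (n - 1)) := by
    rw [← min_add_add_right, hlast]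
    congr 1; ring
  rw [← hfinal]
  refine le_alpha_of_envelope (f := fun i => c + G i) ?_ (fun i hi => ?_) (fun i hi => ?_)
    (fun i hi => ?_)
  · simp only [G, cGain_zero]
    linarith [min_le_left b (B - G (n - 1)), hC.2 0 (Nat.zero_le n)]
  · simp only [G, cGain_succ]
    linarith [hC.2 (i + 1) hi]
  · linarith [min_le_right b (B - G (n - 1)), (hbounds i hi).2]
  · have hlast_nonneg : 0 ≤ c + G n := by
      rw [hfinal]; exact le_min (by linarith) (by linarith)
    linarith [(hbounds i hi).1]

/-- If `P` is last-arc-bounded with respect to a schedule `C` with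
`g_{k-1} < 0`, `b ∈ [0,B]`, `g_{k-1} ≥ -B` and `g^C(P) ≥ -b`, then
`α_b(P) ≥ min{b + g^C(P), B + g_{k-1}}`. -/
theorem alpha_of_lastArcBounded (B : ℝ) (hB : 0 < B) (g C : ℕ → ℝ) (n : ℕ) (hn : 1 ≤ n)
    (hC : Schedule C n) (hLAB : LastArcBoundedC g C n) (hneg : g (n - 1) < 0)
    (b : ℝ) (hb0 : 0 ≤ b) (hbB : b ≤ B) (hgB : -B ≤ g (n - 1)) (hg : -b ≤ cGain g C n) :
    ((min (b + cGain g C n) (B + g (n - 1)) : ℝ) : EReal) ≤ alpha B b g n :=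
  alpha_of_lastArcBounded_general B g C n hn hC hLAB hneg b hgB hg

end

end EV
end
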